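/- arXiv:1212.5853 — 3 statements merged into one kernel-verified Lean document; each statement's English description precedes it below -/
import Mathlib

section
/- Let F be an endofunctor on a category C with terminal object 1. If the limit L of the inverse sequence ⋯ → F³1 → F²1 → F1 → 1 (with connecting maps Fⁿ! where ! : F1 → 1 is the unique map) exists and is preserved by F, then L carries a canonical F-coalgebra structure making it a terminal coalgebra for F. -/
/-!
The structure map `L ⟶ F L` is induced, via the limit `F L` of the shifted chain, by the legs
`L ⟶ Fⁿ⁺¹ 1`. Every coalgebra `(A, a)` carries canonical maps `A ⟶ Fⁿ 1` (`!`, then `F` of the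
previous one after `a`), and a map `A ⟶ L` is a coalgebra morphism exactly when its composites
with the legs of `L` are these maps. Hence coalgebra morphisms `A ⟶ L` are the maps induced by the
cone of canonical maps: existence and uniqueness both come from the universal property of `L`.
-/

open CategoryTheory Limits

universe v u

variable {C : Type u} [Category.{v} C]

/-- The `n`-fold application `Fⁿ 1` of an endofunctor to the terminal object. -/
def iterTerminalObj (F : C ⥤ C) (T : C) : ℕ → C
  | 0 => T
  | n + 1 => F.obj (iterTerminalObj F T n)

/-- The connecting maps `Fⁿ⁺¹ 1 = Fⁿ(F1) ⟶ Fⁿ 1`, namely `Fⁿ !` where `! : F 1 ⟶ 1`. -/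
def iterTerminalMap (F : C ⥤ C) {T : C} (hT : IsTerminal T) :
    ∀ n : ℕ, iterTerminalObj F T (n + 1) ⟶ iterTerminalObj F T n
  | 0 => hT.from _
  | n + 1 => F.map (iterTerminalMap F hT n)

/-- The inverse sequence `⋯ ⟶ F³1 ⟶ F²1 ⟶ F1 ⟶ 1` as a functor `ℕᵒᵖ ⥤ C`. -/
def adamekChain (F : C ⥤ C) {T : C} (hT : IsTerminal T) : ℕᵒᵖ ⥤ C :=
  Functor.ofOpSequence (iterTerminalMap F hT)

open Opposite

namespace CategoryTheory.Limits

def Cone.ofOpSequence {D : ℕᵒᵖ ⥤ C} {P : C} (π : ∀ n : ℕ, P ⟶ D.obj (Opposite.op n))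
    (hπ : ∀ n, π (n + 1) ≫ D.map (homOfLE (n.le_add_right 1)).op = π n) : Cone D where
  pt := P
  π := NatTrans.ofOpSequence π fun n => by simp [hπ]

lemma Cone.π_app_succ_comp {X : ℕ → C} {f : ∀ n, X (n + 1) ⟶ X n}
    (c : Cone (Functor.ofOpSequence f)) (n : ℕ) :
    c.π.app (Opposite.op (n + 1)) ≫ f n = c.π.app (Opposite.op n) := by
  have h := c.w (homOfLE (n.le_add_right 1)).op
  rwa [Functor.ofOpSequence_map_homOfLE_succ] at h

end CategoryTheory.Limits

section Adamek

variable {F : C ⥤ C} {T : C} {hT : IsTerminal T}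

lemma adamekChain_map_succ (n : ℕ) :
    (adamekChain F hT).map (homOfLE (n.le_add_right 1)).op = iterTerminalMap F hT n :=
  Functor.ofOpSequence_map_homOfLE_succ _ n

lemma adamekChain_comp_map_succ (n : ℕ) :
    (adamekChain F hT ⋙ F).map (homOfLE (n.le_add_right 1)).op = iterTerminalMap F hT (n + 1) :=
  congrArg F.map (adamekChain_map_succ n)

def adamekShiftedCone (c : Cone (adamekChain F hT)) : Cone (adamekChain F hT ⋙ F) :=
  Cone.ofOpSequence (fun n => c.π.app (op (n + 1))) fun n => by
    rw [adamekChain_comp_map_succ]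
    exact c.π_app_succ_comp (n + 1)

variable (hT) in
def coalgebraLeg (A : Endofunctor.Coalgebra F) : ∀ n, A.V ⟶ iterTerminalObj F T n
  | 0 => hT.from _
  | n + 1 => A.str ≫ F.map (coalgebraLeg A n)

lemma coalgebraLeg_succ_comp (A : Endofunctor.Coalgebra F) :
    ∀ n, coalgebraLeg hT A (n + 1) ≫ iterTerminalMap F hT n = coalgebraLeg hT A n
  | 0 => hT.hom_ext _ _
  | n + 1 => by
    change (A.str ≫ F.map (coalgebraLeg hT A (n + 1))) ≫ F.map (iterTerminalMap F hT n) = _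
    rw [Category.assoc, ← F.map_comp, coalgebraLeg_succ_comp A n]
    rfl

variable (hT) in
def coalgebraCone (A : Endofunctor.Coalgebra F) : Cone (adamekChain F hT) :=
  Cone.ofOpSequence (coalgebraLeg hT A) fun n => by
    rw [adamekChain_map_succ]
    exact coalgebraLeg_succ_comp A n

variable {c : Cone (adamekChain F hT)} {str : c.pt ⟶ F.obj c.pt}
  (hstr : ∀ n, str ≫ F.map (c.π.app (op n)) = c.π.app (op (n + 1)))
include hstr

lemma comp_π_app_eq_coalgebraLeg {A : Endofunctor.Coalgebra F} {h : A.V ⟶ c.pt}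
    (hh : A.str ≫ F.map h = h ≫ str) : ∀ n, h ≫ c.π.app (op n) = coalgebraLeg hT A n
  | 0 => hT.hom_ext _ _
  | n + 1 => by
    have e : h ≫ str ≫ F.map (c.π.app (op n)) = A.str ≫ F.map (h ≫ c.π.app (op n)) := by
      rw [← Category.assoc, ← hh, Category.assoc, F.map_comp]
    rw [← hstr]
    exact e.trans (by rw [comp_π_app_eq_coalgebraLeg hh n]; rfl)

lemma map_comp_eq_comp_of_comp_π_app (hFc : IsLimit (F.mapCone c))
    {A : Endofunctor.Coalgebra F} {h : A.V ⟶ c.pt}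
    (hπ : ∀ n, h ≫ c.π.app (op n) = coalgebraLeg hT A n) : A.str ≫ F.map h = h ≫ str :=
  hFc.hom_ext fun ⟨n⟩ => by
    simp only [Functor.mapCone_π_app, Category.assoc, ← F.map_comp, hπ, hstr]
    exact (hπ (n + 1)).symm

def liftCoalgebraHom (hc : IsLimit c) (hFc : IsLimit (F.mapCone c))
    (A : Endofunctor.Coalgebra F) : A ⟶ ⟨c.pt, str⟩ where
  f := hc.lift (coalgebraCone hT A)
  h := map_comp_eq_comp_of_comp_π_app hstr hFc fun n => hc.fac _ (op n)

def isTerminalCoalgebraOfIsLimit (hc : IsLimit c) (hFc : IsLimit (F.mapCone c)) :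
    IsTerminal (⟨c.pt, str⟩ : Endofunctor.Coalgebra F) :=
  IsTerminal.ofUniqueHom (liftCoalgebraHom hstr hc hFc) fun A g =>
    Endofunctor.Coalgebra.Hom.ext <| hc.hom_ext fun n => by
      rw [comp_π_app_eq_coalgebraLeg hstr g.h,
        comp_π_app_eq_coalgebraLeg hstr (liftCoalgebraHom hstr hc hFc A).h]

end Adamek

/-- **Adámek's theorem**: if the limit of `⋯ ⟶ F²1 ⟶ F1 ⟶ 1` exists and is preserved by `F`
(i.e. `F` of the limit cone is a limit cone over the shifted diagram), then the limit carries
a canonical `F`-coalgebra structure making it a terminal coalgebra for `F`. -/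
theorem adamek (F : C ⥤ C) {T : C} (hT : IsTerminal T)
    (c : Cone (adamekChain F hT)) (hc : IsLimit c)
    (hFc : IsLimit (F.mapCone c)) :
    ∃ str : c.pt ⟶ F.obj c.pt,
      Nonempty (IsTerminal (⟨c.pt, str⟩ : Endofunctor.Coalgebra F)) :=
  ⟨hFc.lift (adamekShiftedCone c),
    ⟨isTerminalCoalgebraOfIsLimit (fun n => hFc.fac (adamekShiftedCone c) (op n)) hc hFc⟩⟩
end

section
/- If V is an infinitely distributive category (finite products, small coproducts, with products distributing over coproducts), then the category of V-graphs is also infinitely distributive. -/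
open CategoryTheory Limits

universe w w' v u v' u' v'' u''

/-- A `V`-graph: a set of objects together with a `V`-object of arrows between each
ordered pair of objects. -/
structure VGraph (V : Type u) [Category.{v} V] : Type (max u (w + 1)) where
  obj : Type w
  hom : obj → obj → V

namespace VGraph

variable {V : Type u} [Category.{v} V]

/-- A morphism of `V`-graphs: a function on objects together with morphisms on homs. -/
structure Hom (A B : VGraph.{w} V) : Type (max w v) where
  f : A.obj → B.obj
  φ : ∀ a a' : A.obj, A.hom a a' ⟶ B.hom (f a) (f a')

theorem Hom.hext {A B : VGraph.{w} V} {F G : Hom A B}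
    (h1 : F.f = G.f) (h2 : HEq F.φ G.φ) : F = G := by
  cases F; cases G; cases h1; cases h2; rfl

instance : Category.{max w v} (VGraph.{w} V) where
  Hom := Hom
  id A := ⟨id, fun _ _ => 𝟙 _⟩
  comp F G := ⟨G.f ∘ F.f, fun a a' => F.φ a a' ≫ G.φ (F.f a) (F.f a')⟩
  id_comp F := Hom.hext rfl (heq_of_eq (by funext a a'; exact Category.id_comp _))
  comp_id F := Hom.hext rfl (heq_of_eq (by funext a a'; exact Category.comp_id _))
  assoc F G H := Hom.hext rfl (heq_of_eq (by funext a a'; exact Category.assoc _ _ _))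

end VGraph

/-- The functor `H₊ : V-Gph ⥤ W-Gph` induced by `H : V ⥤ W`: identity on object sets,
`H` on hom-objects. -/
def mapGraph {V : Type u} [Category.{v} V] {W : Type u'} [Category.{v'} W] (H : V ⥤ W) :
    VGraph.{w} V ⥤ VGraph.{w} W where
  obj A := ⟨A.obj, fun a a' => H.obj (A.hom a a')⟩
  map F := ⟨F.f, fun a a' => H.map (F.φ a a')⟩
  map_id A := VGraph.Hom.hext rfl (heq_of_eq (by funext a a'; exact H.map_id _))
  map_comp F G := VGraph.Hom.hext rfl (heq_of_eq (by funext a a'; exact H.map_comp _ _))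

/-- An infinitely distributive category: a category with finite products and small
coproducts in which, for every object `X` and every small family `(Yᵢ)`, the canonical map
`∐ᵢ (X × Yᵢ) ⟶ X × ∐ᵢ Yᵢ` is an isomorphism. -/
structure InfinitelyDistributive (V : Type u) [Category.{v} V] : Type (max u (v + 1)) where
  [hasFiniteProducts : HasFiniteProducts V]
  [hasCoproducts : HasCoproducts.{v} V]
  distrib : ∀ (X : V) {ι : Type v} (Y : ι → V),
    IsIso (Sigma.desc fun i => prod.map (𝟙 X) (Sigma.ι Y i) :
      (∐ fun i => X ⨯ Y i) ⟶ X ⨯ (∐ Y))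

/-!
Products and coproducts of `V`-graphs are computed hom-wise: `X × Y` has object set
`X.obj × Y.obj` and hom-objects the products in `V`, while `∐ᵢ Yᵢ` has object set `Σ i, Yᵢ.obj`,
with the hom-objects of `Yᵢ` inside a summand and initial ones across summands. The comparison
`∐ᵢ (X × Yᵢ) ⟶ X × ∐ᵢ Yᵢ` is then a bijection on objects and, on each hom-object, an instance of
distributivity in `V`; a morphism of `V`-graphs with these two properties is invertible.
-/

noncomputable section

theorem CategoryTheory.Limits.isIso_sigmaDesc_of_isIso_distrib {C : Type u'} [Category.{v'} C]
    [HasBinaryProducts C] {κ : Type w} [HasCoproductsOfShape κ C] {X : C} {S T : κ → C}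
    [IsIso (Sigma.desc fun k => prod.map (𝟙 X) (Sigma.ι T k))] (g : ∀ k, S k ⟶ X ⨯ ∐ T)
    (hg : ∀ k, ∃ e : S k ≅ X ⨯ T k, g k = e.hom ≫ prod.map (𝟙 X) (Sigma.ι T k)) :
    IsIso (Sigma.desc g) := by
  choose e he using hg
  have : Sigma.desc g =
      (Sigma.mapIso e).hom ≫ Sigma.desc fun k => prod.map (𝟙 X) (Sigma.ι T k) := by
    refine Sigma.hom_ext _ _ fun k => ?_
    simp [he]
  rw [this]
  infer_instance

namespace VGraph

variable {V : Type u} [Category.{v} V]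

@[ext]
theorem hom_ext {A B : VGraph.{w} V} {F G : A ⟶ B} (hf : F.f = G.f)
    (hφ : ∀ a a', F.φ a a' ≍ G.φ a a') : F = G := by
  obtain ⟨f, φ⟩ := F
  obtain ⟨g, ψ⟩ := G
  obtain rfl : f = g := hf
  obtain rfl : φ = ψ := funext fun a => funext fun a' => eq_of_heq (hφ a a')
  rfl

theorem comp_φ {A B C : VGraph.{w} V} (F : A ⟶ B) (G : B ⟶ C) (a a' : A.obj) :
    (F ≫ G).φ a a' = F.φ a a' ≫ G.φ (F.f a) (F.f a') := rfl

theorem isIso_of_bijective {A B : VGraph.{w} V} (F : A ⟶ B) (hf : Function.Bijective F.f)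
    [∀ a a', IsIso (F.φ a a')] : IsIso F := by
  let e := Equiv.ofBijective _ hf
  -- stated for any `b = a` so that the equations between objects can be eliminated
  have left : ∀ a a' b b' (hb : b = a) (hb' : b' = a')
      (h : B.hom (F.f a) (F.f a') = B.hom (F.f b) (F.f b')),
      F.φ a a' ≫ eqToHom h ≫ inv (F.φ b b') ≍ 𝟙 (A.hom a a') := by
    rintro a a' _ _ rfl rfl h
    simp
  have right : ∀ b b' c c' (hc : c = b) (hc' : c' = b') (h : B.hom b b' = B.hom c c'),
      eqToHom h ≍ 𝟙 (B.hom b b') := by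
    rintro b b' _ _ rfl rfl h
    simp
  refine ⟨⟨e.symm, fun b b' => eqToHom ?_ ≫ inv (F.φ (e.symm b) (e.symm b'))⟩, ?_, ?_⟩
  · rw [show F.f (e.symm b) = b from e.apply_symm_apply b,
      show F.f (e.symm b') = b' from e.apply_symm_apply b']
  · ext a a'
    · exact e.symm_apply_apply a
    · exact left a a' _ _ (e.symm_apply_apply a) (e.symm_apply_apply a') _
  · ext b b'
    · exact e.apply_symm_apply b
    · rw [comp_φ, Category.assoc, IsIso.inv_hom_id, Category.comp_id]
      exact right b b' _ _ (e.apply_symm_apply b) (e.apply_symm_apply b') _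

section Products

def terminalGraph [HasTerminal V] : VGraph.{w} V := ⟨PUnit, fun _ _ => ⊤_ V⟩

def terminalGraphIsTerminal [HasTerminal V] : IsTerminal (terminalGraph : VGraph.{w} V) :=
  IsTerminal.ofUniqueHom (fun _ => ⟨fun _ => PUnit.unit, fun _ _ => terminal.from _⟩)
    fun _ _ => hom_ext rfl fun _ _ => heq_of_eq (terminal.hom_ext _ _)

variable [HasBinaryProducts V]

def prodGraph (A B : VGraph.{w} V) : VGraph.{w} V :=
  ⟨A.obj × B.obj, fun p q => A.hom p.1 q.1 ⨯ B.hom p.2 q.2⟩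

def prodFst (A B : VGraph.{w} V) : prodGraph A B ⟶ A := ⟨Prod.fst, fun _ _ => prod.fst⟩

def prodSnd (A B : VGraph.{w} V) : prodGraph A B ⟶ B := ⟨Prod.snd, fun _ _ => prod.snd⟩

def prodLift {A B C : VGraph.{w} V} (F : C ⟶ A) (G : C ⟶ B) : C ⟶ prodGraph A B :=
  ⟨fun c => (F.f c, G.f c), fun c c' => prod.lift (F.φ c c') (G.φ c c')⟩

def prodFanIsLimit (A B : VGraph.{w} V) : IsLimit (BinaryFan.mk (prodFst A B) (prodSnd A B)) :=
  BinaryFan.IsLimit.mk _ prodLift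
    (fun _ _ => hom_ext rfl fun _ _ => heq_of_eq (prod.lift_fst _ _))
    (fun _ _ => hom_ext rfl fun _ _ => heq_of_eq (prod.lift_snd _ _))
    (fun _ _ m hm₁ hm₂ => by
      subst hm₁ hm₂
      exact hom_ext rfl fun _ _ =>
        heq_of_eq (prod.hom_ext (prod.lift_fst _ _).symm (prod.lift_snd _ _).symm))

def prodGraphMap (X : VGraph.{w} V) {A B : VGraph.{w} V} (g : A ⟶ B) :
    prodGraph X A ⟶ prodGraph X B :=
  ⟨Prod.map id g.f, fun p q => prod.map (𝟙 _) (g.φ p.2 q.2)⟩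

theorem prodGraphMap_fst (X : VGraph.{w} V) {A B : VGraph.{w} V} (g : A ⟶ B) :
    prodGraphMap X g ≫ prodFst X B = prodFst X A :=
  hom_ext rfl fun _ _ => heq_of_eq ((prod.map_fst _ _).trans (Category.comp_id _))

theorem prodGraphMap_snd (X : VGraph.{w} V) {A B : VGraph.{w} V} (g : A ⟶ B) :
    prodGraphMap X g ≫ prodSnd X B = prodSnd X A ≫ g :=
  hom_ext rfl fun _ _ => heq_of_eq (prod.map_snd _ _)

def prodLeft (X : VGraph.{w} V) : VGraph.{w} V ⥤ VGraph.{w} V where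
  obj := prodGraph X
  map := prodGraphMap X
  map_id _ := hom_ext rfl fun _ _ => heq_of_eq prod.map_id_id
  map_comp _ _ := hom_ext rfl fun _ _ => heq_of_eq (prod.map_id_comp _ _)

variable [HasBinaryProducts (VGraph.{w} V)]

def prodGraphIso (A B : VGraph.{w} V) : prodGraph A B ≅ A ⨯ B :=
  (prodFanIsLimit A B).conePointUniqueUpToIso (limit.isLimit _)

theorem prodGraphIso_hom_fst (A B : VGraph.{w} V) :
    (prodGraphIso A B).hom ≫ prod.fst = prodFst A B :=
  (prodFanIsLimit A B).conePointUniqueUpToIso_hom_comp _ ⟨.left⟩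

theorem prodGraphIso_hom_snd (A B : VGraph.{w} V) :
    (prodGraphIso A B).hom ≫ prod.snd = prodSnd A B :=
  (prodFanIsLimit A B).conePointUniqueUpToIso_hom_comp _ ⟨.right⟩

theorem prodGraphMap_comp_prodGraphIso_hom (X : VGraph.{w} V) {A B : VGraph.{w} V}
    (g : A ⟶ B) :
    prodGraphMap X g ≫ (prodGraphIso X B).hom = (prodGraphIso X A).hom ≫ prod.map (𝟙 X) g := by
  apply prod.hom_ext
  · simp [prodGraphIso_hom_fst, prodGraphMap_fst]
  · simp [prodGraphIso_hom_snd, reassoc_of% prodGraphIso_hom_snd, prodGraphMap_snd]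

def prodLeftIso (X : VGraph.{w} V) : prodLeft X ≅ prod.functor.obj X :=
  NatIso.ofComponents (prodGraphIso X) (prodGraphMap_comp_prodGraphIso_hom X)

end Products

instance [HasFiniteProducts V] : HasFiniteProducts (VGraph.{w} V) :=
  have : HasTerminal (VGraph.{w} V) := terminalGraphIsTerminal.hasTerminal
  have : HasBinaryProducts (VGraph.{w} V) :=
    have : ∀ {A B : VGraph.{w} V}, HasLimit (pair A B) := HasLimit.mk ⟨_, prodFanIsLimit _ _⟩
    hasBinaryProducts_of_hasLimit_pair _
  hasFiniteProducts_of_has_binary_and_terminal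

section Coproducts

variable [HasCoproducts.{v} V] {ι : Type w}

/-- The hom-object of `sigmaGraph A` from `⟨i, a⟩` to `⟨j, b⟩` is a coproduct indexed by the
proofs of `i = j`: a copy of `(A j).hom a b` if `i = j`, and the initial object otherwise. -/
def sigmaHom (A : ι → VGraph.{w} V) (p q : Σ i, (A i).obj) : ULift.{v} (PLift (p.1 = q.1)) → V :=
  fun h => (A q.1).hom (h.down.down ▸ p.2) q.2

def sigmaGraph (A : ι → VGraph.{w} V) : VGraph.{w} V :=
  ⟨Σ i, (A i).obj, fun p q => ∐ sigmaHom A p q⟩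

def sigmaInj (A : ι → VGraph.{w} V) (i : ι) : A i ⟶ sigmaGraph A :=
  ⟨fun a => ⟨i, a⟩, fun a a' => Sigma.ι (sigmaHom A ⟨i, a⟩ ⟨i, a'⟩) ⟨⟨rfl⟩⟩⟩

def sigmaDesc {A : ι → VGraph.{w} V} {T : VGraph.{w} V} (G : ∀ i, A i ⟶ T) :
    sigmaGraph A ⟶ T :=
  ⟨fun p => (G p.1).f p.2, fun p q => Sigma.desc fun h =>
    match p, q, h with
    | ⟨i, a⟩, ⟨_, b⟩, ⟨⟨rfl⟩⟩ => (G i).φ a b⟩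

theorem sigmaInj_sigmaDesc {A : ι → VGraph.{w} V} {T : VGraph.{w} V} (G : ∀ i, A i ⟶ T)
    (i : ι) : sigmaInj A i ≫ sigmaDesc G = G i :=
  hom_ext rfl fun _ _ => heq_of_eq <| Sigma.ι_desc (f := sigmaHom A _ _) _ _

theorem eq_sigmaDesc {A : ι → VGraph.{w} V} {T : VGraph.{w} V} (m : sigmaGraph A ⟶ T) :
    m = sigmaDesc fun i => sigmaInj A i ≫ m := by
  refine hom_ext rfl fun ⟨i, a⟩ ⟨j, b⟩ => heq_of_eq ?_
  refine Sigma.hom_ext _ _ fun h => ?_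
  obtain ⟨⟨rfl : i = j⟩⟩ := h
  have := sigmaInj_sigmaDesc (fun i => sigmaInj A i ≫ m) i
  exact eq_of_heq (congr_arg_heq (fun F : A i ⟶ T => F.φ a b) this).symm

def sigmaCofanIsColimit (A : ι → VGraph.{w} V) : IsColimit (Cofan.mk (sigmaGraph A) (sigmaInj A)) :=
  Cofan.IsColimit.mk _ (fun t => sigmaDesc t.inj) (fun t => sigmaInj_sigmaDesc t.inj)
    fun _ m hm => (eq_sigmaDesc m).trans (congrArg sigmaDesc (funext hm))

instance : HasCoproducts.{w} (VGraph.{w} V) := fun J =>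
  have : ∀ A : J → VGraph.{w} V, HasCoproduct A := fun A => HasColimit.mk ⟨_, sigmaCofanIsColimit A⟩
  ⟨fun _ => hasColimit_of_iso Discrete.natIsoFunctor⟩

end Coproducts

section Distributivity

variable [HasBinaryProducts V] [HasCoproducts.{v} V] {ι : Type w}

def sigmaProdComparison (X : VGraph.{w} V) (Y : ι → VGraph.{w} V) :
    sigmaGraph (fun i => prodGraph X (Y i)) ⟶ prodGraph X (sigmaGraph Y) :=
  sigmaDesc fun i => prodGraphMap X (sigmaInj Y i)

theorem isIso_sigmaProdComparison
    (hV : ∀ (Z : V) {κ : Type v} (T : κ → V),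
      IsIso (Sigma.desc fun k => prod.map (𝟙 Z) (Sigma.ι T k)))
    (X : VGraph.{w} V) (Y : ι → VGraph.{w} V) : IsIso (sigmaProdComparison X Y) := by
  have hf : Function.Bijective (sigmaProdComparison X Y).f := by
    refine ⟨?_, fun ⟨x, i, y⟩ => ⟨⟨i, x, y⟩, rfl⟩⟩
    rintro ⟨i, x, y⟩ ⟨j, x', y'⟩ h
    obtain ⟨rfl, h⟩ := Prod.mk.inj (h : (x, (⟨i, y⟩ : Σ i, (Y i).obj)) = (x', ⟨j, y'⟩))
    obtain ⟨rfl, h⟩ := Sigma.mk.inj h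
    obtain rfl := eq_of_heq h
    rfl
  have hφ : ∀ p q, IsIso ((sigmaProdComparison X Y).φ p q) := by
    rintro ⟨i, x, y⟩ ⟨j, x', y'⟩
    have := hV (X.hom x x') (sigmaHom Y ⟨i, y⟩ ⟨j, y'⟩)
    refine isIso_sigmaDesc_of_isIso_distrib (X := X.hom x x') (T := sigmaHom Y ⟨i, y⟩ ⟨j, y'⟩) _
      fun h => ?_
    obtain ⟨⟨rfl : i = j⟩⟩ := h
    exact ⟨Iso.refl _, (Category.id_comp _).symm⟩
  exact isIso_of_bijective _ hf

theorem prodLeft_preservesColimit (X : VGraph.{w} V) (Y : ι → VGraph.{w} V)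
    [IsIso (sigmaProdComparison X Y)] : PreservesColimit (Discrete.functor Y) (prodLeft X) :=
  preservesColimit_of_preserves_colimit_cocone (sigmaCofanIsColimit Y) <|
    (isColimitMapCoconeCofanMkEquiv _ _ _).symm <|
      IsColimit.ofIsoColimit (sigmaCofanIsColimit _)
        (Cofan.ext (asIso (sigmaProdComparison X Y) :) (sigmaInj_sigmaDesc _))

end Distributivity

def infinitelyDistributive (h : InfinitelyDistributive V) : InfinitelyDistributive (VGraph.{v} V) :=
  have := h.hasFiniteProducts
  have := h.hasCoproducts
  { distrib := fun X _ Y =>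
      have := isIso_sigmaProdComparison h.distrib X Y
      have := prodLeft_preservesColimit X Y
      have := preservesColimit_of_natIso (Discrete.functor Y) (prodLeftIso X)
      -- `prod.map (𝟙 X)` is `(prod.functor.obj X).map`, so the map is a `sigmaComparison`
      inferInstanceAs (IsIso (sigmaComparison (prod.functor.obj X) Y)) }

end VGraph

end

/-- If `V` is an infinitely distributive category, then the category of `V`-graphs is also
infinitely distributive. -/
theorem vgraph_infinitelyDistributive (V : Type u) [Category.{v} V]
    (h : InfinitelyDistributive V) :
    Nonempty (InfinitelyDistributive (VGraph.{v} V)) :=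
  ⟨VGraph.infinitelyDistributive h⟩
end

section
/- Let C be a category with object C, and let D, F be endofunctors of C/C and C respectively such that U ∘ D = F ∘ U where U : C/C → C is the forgetful functor. If F satisfies the hypotheses of Adámek's theorem (the limit of ⋯ → F²1 → F1 → 1 exists and is preserved by F), then D also satisfies them, and the image under U of the terminal D-coalgebra is the terminal F-coalgebra. -/
open CategoryTheory Limits

universe v u

variable {C : Type u} [Category.{v} C]

/-- The hypotheses of Adámek's theorem for an endofunctor `F`: there is a terminal object
`T`, the limit of the sequence `⋯ ⟶ F²1 ⟶ F1 ⟶ 1` exists, and it is preserved by `F`. -/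
def AdamekHypotheses (F : C ⥤ C) : Prop :=
  ∃ T : C, Nonempty (Σ (hT : IsTerminal T) (c : Cone (adamekChain F hT)),
    IsLimit c × IsLimit (F.mapCone c))

/-!
Adámek's construction: if the limit `L` of `⋯ → F²1 → F1 → 1` exists and is preserved by `F`,
then `L ≅ lim Fⁿ⁺¹1 ≅ F L` makes `L` a terminal coalgebra, since a coalgebra `B → F B` determines
a unique compatible family `B → Fⁿ1`, and a coalgebra morphism into `L` must induce that family.

The forgetful functor `U : X/C ⥤ C` sends the terminal object `X → 1` to `1` and, as it
intertwines `D` with `F`, sends the chain of `D` to the chain of `F`. As `U` creates limits, the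
chain of `D` has a limit, which `D` preserves because `U ∘ D = F ∘ U` preserves it and `U`
reflects limits. Finally `U` carries the Adámek coalgebra of `D` to an Adámek coalgebra of `F`
(the structure maps agree on every leg), and every terminal `D`-coalgebra is isomorphic to it.
-/

namespace Adamek

section Terminal

variable (F : C ⥤ C) {T : C} (hT : IsTerminal T)

@[simp]
lemma adamekChain_map_succ (n : ℕ) :
    (adamekChain F hT).map (homOfLE (Nat.le_add_right n 1)).op = iterTerminalMap F hT n :=
  Functor.ofOpSequence_map_homOfLE_succ _ n

def coalgebraLegs (B : Endofunctor.Coalgebra F) : ∀ n : ℕ, B.V ⟶ iterTerminalObj F T n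
  | 0 => hT.from B.V
  | n + 1 => B.str ≫ F.map (coalgebraLegs B n)

lemma coalgebraLegs_succ (B : Endofunctor.Coalgebra F) (n : ℕ) :
    coalgebraLegs F hT B (n + 1) = B.str ≫ F.map (coalgebraLegs F hT B n) := rfl

lemma coalgebraLegs_comp_iterTerminalMap (B : Endofunctor.Coalgebra F) (n : ℕ) :
    coalgebraLegs F hT B (n + 1) ≫ iterTerminalMap F hT n = coalgebraLegs F hT B n := by
  induction n with
  | zero => exact hT.hom_ext _ _
  | succ n ih =>
    change (B.str ≫ F.map _) ≫ F.map _ = _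
    rw [Category.assoc, ← F.map_comp, ih, coalgebraLegs_succ]

-- An `abbrev`, so that `hc.lift (coalgebraCone F hT B)` has source `B.V` for `rw`.
abbrev coalgebraCone (B : Endofunctor.Coalgebra F) : Cone (adamekChain F hT) where
  pt := B.V
  π := NatTrans.ofOpSequence (coalgebraLegs F hT B) fun n => by
    rw [adamekChain_map_succ]
    exact (Category.id_comp _).trans (coalgebraLegs_comp_iterTerminalMap F hT B n).symm

def shiftCone (c : Cone (adamekChain F hT)) : Cone (adamekChain F hT ⋙ F) where
  pt := c.pt
  π := NatTrans.ofOpSequence (fun n => c.π.app ⟨n + 1⟩) fun n => by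
    have h := c.w (homOfLE (Nat.le_add_right (n + 1) 1)).op
    rw [adamekChain_map_succ] at h
    rw [Functor.comp_map, adamekChain_map_succ]
    exact (Category.id_comp _).trans h.symm

variable {F hT} {c : Cone (adamekChain F hT)}

def adamekStr (hFc : IsLimit (F.mapCone c)) : c.pt ⟶ F.obj c.pt :=
  hFc.lift (shiftCone F hT c)

lemma adamekStr_comp_map_π (hFc : IsLimit (F.mapCone c)) (n : ℕ) :
    adamekStr hFc ≫ F.map (c.π.app ⟨n⟩) = c.π.app ⟨n + 1⟩ :=
  hFc.fac (shiftCone F hT c) ⟨n⟩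

variable {β : c.pt ⟶ F.obj c.pt} (hβ : ∀ n : ℕ, β ≫ F.map (c.π.app ⟨n⟩) = c.π.app ⟨n + 1⟩)
include hβ

lemma hom_f_comp_π_eq_coalgebraLegs {B : Endofunctor.Coalgebra F} (f : B ⟶ ⟨c.pt, β⟩) (n : ℕ) :
    f.f ≫ c.π.app ⟨n⟩ = coalgebraLegs F hT B n := by
  induction n with
  | zero => exact hT.hom_ext _ _
  | succ n ih =>
    have h := f.h =≫ F.map (c.π.app ⟨n⟩)
    simp only [Category.assoc, ← F.map_comp, hβ, ih] at h
    exact h.symm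

lemma str_comp_map_lift_coalgebraCone (hc : IsLimit c) (hFc : IsLimit (F.mapCone c))
    (B : Endofunctor.Coalgebra F) :
    B.str ≫ F.map (hc.lift (coalgebraCone F hT B) : B.V ⟶ c.pt) =
      (hc.lift (coalgebraCone F hT B) : B.V ⟶ c.pt) ≫ β := by
  refine hFc.hom_ext fun ⟨n⟩ => ?_
  show (B.str ≫ F.map _) ≫ F.map (c.π.app ⟨n⟩) = (_ ≫ β) ≫ F.map (c.π.app ⟨n⟩)
  rw [Category.assoc, Category.assoc, hβ, ← F.map_comp, hc.fac]
  exact (hc.fac (coalgebraCone F hT B) ⟨n + 1⟩).symm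

def isTerminalOfIsLimit (hc : IsLimit c) (hFc : IsLimit (F.mapCone c)) :
    IsTerminal (⟨c.pt, β⟩ : Endofunctor.Coalgebra F) :=
  IsTerminal.ofUniqueHom
    (fun B => ⟨hc.lift (coalgebraCone F hT B), str_comp_map_lift_coalgebraCone hβ hc hFc B⟩)
    (fun B f => Endofunctor.Coalgebra.Hom.ext <| hc.hom_ext fun ⟨n⟩ =>
      (hom_f_comp_π_eq_coalgebraLegs hβ f n).trans (hc.fac (coalgebraCone F hT B) ⟨n⟩).symm)

end Terminal

section Transfer

variable {A : Type*} [Category A] {U : A ⥤ C} {G : A ⥤ A} {F : C ⥤ C}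

def coalgebraLift (α : G ⋙ U ⟶ U ⋙ F) :
    Endofunctor.Coalgebra G ⥤ Endofunctor.Coalgebra F where
  obj B := ⟨U.obj B.V, U.map B.str ≫ α.app B.V⟩
  map {B B'} f := ⟨U.map f.f, by
    have h := α.naturality f.f
    dsimp at h
    rw [Category.assoc, ← h, ← U.map_comp_assoc, f.h, U.map_comp_assoc]⟩

variable (α : G ⋙ U ≅ U ⋙ F) {T : A} (hT : IsTerminal T) {T' : C} (hT' : IsTerminal T')
  (e : U.obj T ≅ T')

def iterTerminalObjCompIso : ∀ n : ℕ, U.obj (iterTerminalObj G T n) ≅ iterTerminalObj F T' n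
  | 0 => e
  | n + 1 => α.app _ ≪≫ F.mapIso (iterTerminalObjCompIso n)

lemma map_iterTerminalMap_comp_iterTerminalObjCompIso (n : ℕ) :
    U.map (iterTerminalMap G hT n) ≫ (iterTerminalObjCompIso α e n).hom =
      (iterTerminalObjCompIso α e (n + 1)).hom ≫ iterTerminalMap F hT' n := by
  induction n with
  | zero => exact hT'.hom_ext _ _
  | succ n ih =>
    have h := α.hom.naturality (iterTerminalMap G hT n)
    dsimp at h
    change U.map (G.map _) ≫ α.hom.app _ ≫ F.map _ = (α.hom.app _ ≫ F.map _) ≫ F.map _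
    rw [reassoc_of% h, Category.assoc, ← F.map_comp, ← F.map_comp, ih]

def adamekChainCompHom : adamekChain G hT ⋙ U ⟶ adamekChain F hT' :=
  NatTrans.ofOpSequence (fun n => (iterTerminalObjCompIso α e n).hom) fun n => by
    rw [Functor.comp_map, adamekChain_map_succ, adamekChain_map_succ]
    exact map_iterTerminalMap_comp_iterTerminalObjCompIso α hT hT' e n

instance : IsIso (adamekChainCompHom α hT hT' e) :=
  have (n : ℕᵒᵖ) : IsIso ((adamekChainCompHom α hT hT' e).app n) :=
    inferInstanceAs (IsIso (iterTerminalObjCompIso α e n.unop).hom)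
  NatIso.isIso_of_isIso_app _

noncomputable def adamekChainCompIso : adamekChain G hT ⋙ U ≅ adamekChain F hT' :=
  asIso (adamekChainCompHom α hT hT' e)

def mapAdamekCone (c : Cone (adamekChain G hT)) : Cone (adamekChain F hT') :=
  (Cone.postcompose (adamekChainCompHom α hT hT' e)).obj (U.mapCone c)

lemma adamekChainCompHom_app_succ (n : ℕ) :
    (adamekChainCompHom α hT hT' e).app ⟨n + 1⟩ =
      α.hom.app ((adamekChain G hT).obj ⟨n⟩) ≫ F.map ((adamekChainCompHom α hT hT' e).app ⟨n⟩) :=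
  rfl

lemma map_adamekStr_comp_app_comp_map_π {c : Cone (adamekChain G hT)}
    (hGc : IsLimit (G.mapCone c)) (n : ℕ) :
    (U.map (adamekStr hGc) ≫ α.hom.app c.pt) ≫ F.map ((mapAdamekCone α hT hT' e c).π.app ⟨n⟩) =
      (mapAdamekCone α hT hT' e c).π.app ⟨n + 1⟩ := by
  have h := α.hom.naturality (c.π.app ⟨n⟩)
  dsimp at h
  simp only [mapAdamekCone, Cone.postcompose_obj_π, NatTrans.comp_app, Functor.mapCone_π_app,
    adamekChainCompHom_app_succ, F.map_comp, Category.assoc]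
  rw [reassoc_of% h.symm, ← U.map_comp_assoc, adamekStr_comp_map_π]
  rfl

variable [HasLimit (adamekChain F hT')]
include α hT hT' e

lemma hasLimit_adamekChain_comp : HasLimit (adamekChain G hT ⋙ U) :=
  hasLimit_of_iso (adamekChainCompIso α hT hT' e).symm

variable [CreatesLimitsOfShape ℕᵒᵖ U]

lemma hasLimit_adamekChain_of_compIso : HasLimit (adamekChain G hT) :=
  have := hasLimit_adamekChain_comp α hT hT' e
  hasLimit_of_created _ U

noncomputable def isLimitMapAdamekCone {c : Cone (adamekChain G hT)} (hc : IsLimit c) :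
    IsLimit (mapAdamekCone α hT hT' e c) :=
  have := hasLimit_adamekChain_comp α hT hT' e
  have := preservesLimit_of_createsLimit_and_hasLimit (adamekChain G hT) U
  (IsLimit.postcomposeHomEquiv (adamekChainCompIso α hT hT' e) _).symm (isLimitOfPreserves U hc)

variable [PreservesLimit (adamekChain F hT') F]

lemma preservesLimit_adamekChain_of_compIso : PreservesLimit (adamekChain G hT) G :=
  have := hasLimit_adamekChain_comp α hT hT' e
  have := preservesLimit_of_createsLimit_and_hasLimit (adamekChain G hT) U
  have := preservesLimit_of_iso_diagram F (adamekChainCompIso α hT hT' e).symm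
  have := preservesLimit_of_natIso (adamekChain G hT) α.symm
  preservesLimit_of_reflects_of_preserves G U

theorem adamekHypotheses_of_compIso : AdamekHypotheses G :=
  have := hasLimit_adamekChain_of_compIso α hT hT' e
  have := preservesLimit_adamekChain_of_compIso α hT hT' e
  ⟨T, ⟨⟨hT, limit.cone _, limit.isLimit _, isLimitOfPreserves G (limit.isLimit _)⟩⟩⟩

noncomputable def isTerminalCoalgebraLiftObj {B : Endofunctor.Coalgebra G} (hB : IsTerminal B) :
    IsTerminal ((coalgebraLift α.hom).obj B) :=
  have := hasLimit_adamekChain_of_compIso α hT hT' e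
  have := preservesLimit_adamekChain_of_compIso α hT hT' e
  have hc := limit.isLimit (adamekChain G hT)
  have hGc := isLimitOfPreserves G hc
  have ht := isLimitMapAdamekCone α hT hT' e hc
  have hLim := isTerminalOfIsLimit (adamekStr_comp_map_π hGc) hc hGc
  have hLift := isTerminalOfIsLimit (map_adamekStr_comp_app_comp_map_π α hT hT' e hGc) ht
    (isLimitOfPreserves F ht)
  hLift.ofIso ((coalgebraLift α.hom).mapIso (hLim.uniqueUpToIso hB))

end Transfer

end Adamek

def _root_.CategoryTheory.Under.isTerminalMk {X T : C} (hT : IsTerminal T) :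
    IsTerminal (Under.mk (hT.from X)) :=
  IsTerminal.ofUniqueHom (fun Y => Under.homMk (hT.from Y.right) (hT.hom_ext _ _))
    fun _ _ => Under.UnderMorphism.ext (hT.hom_ext _ _)

/-- Let `C` be a category with an object `X`, and let `D`, `F` be endofunctors of the
coslice `X/C` and of `C` respectively, with `U ∘ D = F ∘ U` for the forgetful functor
`U : X/C ⥤ C`.  If `F` satisfies the hypotheses of Adámek's theorem, then so does `D`, and
the image under `U` of any terminal `D`-coalgebra is a terminal `F`-coalgebra. -/
theorem coslice_adamek_transfer (X : C) (D : Under X ⥤ Under X) (F : C ⥤ C)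
    (hUD : D ⋙ Under.forget X = Under.forget X ⋙ F)
    (hF : AdamekHypotheses F) :
    AdamekHypotheses D ∧
    ∀ A : Endofunctor.Coalgebra D, IsTerminal A →
      Nonempty (IsTerminal
        (⟨(Under.forget X).obj A.V,
          (Under.forget X).map A.str ≫ eqToHom (Functor.congr_obj hUD A.V)⟩ :
          Endofunctor.Coalgebra F)) := by
  obtain ⟨T, ⟨hT, c, hc, hFc⟩⟩ := hF
  have : HasLimit (adamekChain F hT) := ⟨⟨⟨c, hc⟩⟩⟩
  have : PreservesLimit (adamekChain F hT) F := preservesLimit_of_preserves_limit_cone hc hFc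
  have hTX := Under.isTerminalMk (X := X) hT
  refine ⟨Adamek.adamekHypotheses_of_compIso (eqToIso hUD) hTX hT (Iso.refl T),
    fun A hA => ⟨?_⟩⟩
  have h := Adamek.isTerminalCoalgebraLiftObj (eqToIso hUD) hTX hT (Iso.refl T) hA
  change IsTerminal (⟨_, _ ≫ (eqToHom hUD).app A.V⟩ : Endofunctor.Coalgebra F) at h
  rwa [eqToHom_app] at h
end
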